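/- Suppose d is even and η(e0) = η(e1) = η(e2) = 1. Then the number of points (x0 : x1 : x2) ∈ ℙ²(F_q) with C(x0, x1, x2) = 0 equals 3(q - 1)²/8; equivalently, writing n = (q-1)/2 = d, it equals n(n + q - 1)/2. -/

import Mathlib

open MvPolynomial

noncomputable def fermatSlice (F : Type) [Field F] (d : ℕ) (e0 e1 e2 : F) :
    MvPolynomial (Fin 3) F :=
  X 0 ^ d + X 1 ^ d + X 2 ^ d +
    (MvPolynomial.C e0 * X 0 + MvPolynomial.C e1 * X 1 + MvPolynomial.C e2 * X 2) ^ d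

/-!
Substituting `yᵢ = eᵢ xᵢ` leaves every `xᵢ ^ d` unchanged, and `u ^ d = η u` in `F`; since `p > 4`,
a nonzero `y` lies on the curve iff `η y₀ + η y₁ + η y₂ + η (y₀ + y₁ + y₂) = 0` in `ℤ`. As `-1` is a
square, this forces all four arguments to be nonzero, two in each square class, so eight times the
indicator is a polynomial in `η` and the trivial character `η₀` (zero at `0`). Each monomial is
summed over `F³` by iterated correlation, and correlating functions `a + b δ₀ + c η` (`δ₀` the
indicator of `0`) stays in that family, by the Jacobi sum `J(η, η) = -η (-1)`. This gives
`3 (q - 1)³` affine points, i.e. `3 (q - 1)² / 8` projective ones.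
-/

open Finset

section CrossCorrelation
variable {G R : Type*} [AddCommGroup G] [Fintype G] [CommSemiring R]

def crossCorr (f g : G → R) (s : G) : R := ∑ z, f z * g (z + s)

theorem sum_sum_sum_mul_eq_crossCorr (f₁ f₂ f₃ f₄ : G → R) :
    ∑ x, ∑ y, ∑ z, f₁ x * f₂ y * f₃ z * f₄ (x + y + z) =
      crossCorr f₁ (crossCorr f₂ (crossCorr f₃ f₄)) 0 := by
  simp only [crossCorr, add_zero, mul_sum]
  refine sum_congr rfl fun x _ => sum_congr rfl fun y _ => sum_congr rfl fun z _ => ?_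
  rw [show x + y + z = z + (y + x) by abel]
  ring

end CrossCorrelation

section QuadraticChar
variable {F : Type*} [Field F] [Fintype F] [DecidableEq F]

local notation "η" => quadraticChar F
local notation "η₀" => (1 : MulChar F ℤ)

theorem sum_quadraticChar_mul_quadraticChar_add (hF : ringChar F ≠ 2) (s : F) :
    ∑ z, η z * η (z + s) = if s = 0 then (Fintype.card F : ℤ) - 1 else -1 := by
  split_ifs with hs
  · have hsq : η * η = 1 := by
      rw [← sq, (quadraticChar_isQuadratic F).sq_eq_one]
    simp_rw [hs, add_zero, ← MulChar.mul_apply, hsq, MulChar.sum_one_eq_card_units,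
      Fintype.card_units, Nat.cast_pred Fintype.card_pos]
  · -- `z = -s * u` turns the sum into `η (-1) * jacobiSum η η`
    have hJ := jacobiSum_nontrivial_inv (quadraticChar_ne_one hF)
    rw [(quadraticChar_isQuadratic F).inv, jacobiSum] at hJ
    have hscale : ∀ u : F, η (-s * u) * η (-s * u + s) = η (-1) * (η u * η (1 - u)) := by
      intro u
      rw [show -s * u + s = s * (1 - u) by ring, show -s * u = -1 * s * u by ring]
      have hs2 := quadraticChar_sq_one hs
      simp only [map_mul]
      linear_combination (η (-1) * η u * η (1 - u)) * hs2
    rw [← Equiv.sum_comp (Equiv.mulLeft₀ (-s) (neg_ne_zero.2 hs))]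
    simp only [Equiv.mulLeft₀_apply, hscale, ← mul_sum, hJ, mul_neg, ← sq,
      quadraticChar_sq_one (neg_ne_zero.2 (one_ne_zero (α := F)))]

variable (F) in
def charComb (a b c : ℤ) (s : F) : ℤ := a + b * (if s = 0 then 1 else 0) + c * η s

theorem sum_charComb_add (hF : ringChar F ≠ 2) (a b c : ℤ) (s : F) :
    ∑ z, charComb F a b c (z + s) = a * Fintype.card F + b := by
  rw [Fintype.sum_equiv (Equiv.addRight s) (fun z => charComb F a b c (z + s)) _ fun _ => rfl]
  simp only [charComb, sum_add_distrib, ← mul_sum, quadraticChar_sum_zero hF, sum_const, card_univ,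
    sum_ite_eq', mem_univ, if_true, nsmul_eq_mul]
  ring

theorem crossCorr_charComb_left (a b c : ℤ) (g : F → ℤ) (s : F) :
    crossCorr (charComb F a b c) g s =
      a * ∑ z, g (z + s) + b * g s + c * ∑ z, η z * g (z + s) := by
  simp [crossCorr, charComb, add_mul, sum_add_distrib, mul_sum, mul_assoc]

theorem sum_quadraticChar_mul_charComb_add (hF : ringChar F ≠ 2) (hF1 : η (-1) = 1)
    (a b c : ℤ) (s : F) :
    ∑ z, η z * charComb F a b c (z + s) =
      charComb F (-c) (c * Fintype.card F) b s := by
  have hdelta : ∑ z, η z * (if z + s = 0 then 1 else 0) = η s := by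
    simp only [add_eq_zero_iff_eq_neg, mul_ite, mul_one, mul_zero, sum_ite_eq', mem_univ, if_true,
      neg_eq_neg_one_mul s, map_mul, hF1, one_mul]
  have hexpand : ∀ z, η z * charComb F a b c (z + s) =
      a * η z + b * (η z * (if z + s = 0 then 1 else 0)) + c * (η z * η (z + s)) := fun z => by
    simp only [charComb]; ring
  rw [sum_congr rfl fun z _ => hexpand z]
  simp only [sum_add_distrib, ← mul_sum, quadraticChar_sum_zero hF, hdelta,
    sum_quadraticChar_mul_quadraticChar_add hF]
  simp only [charComb]
  split_ifs <;> ring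

theorem crossCorr_charComb (hF : ringChar F ≠ 2) (hF1 : η (-1) = 1) (a b c a' b' c' : ℤ) :
    crossCorr (charComb F a b c) (charComb F a' b' c') =
      charComb F (a * (a' * Fintype.card F + b') + b * a' - c * c')
        (b * b' + c * c' * Fintype.card F) (b * c' + c * b') := by
  ext s
  rw [crossCorr_charComb_left, sum_charComb_add hF, sum_quadraticChar_mul_charComb_add hF hF1]
  simp only [charComb]
  ring

theorem quadraticChar_eq_charComb : ⇑η = charComb F 0 0 1 := by
  ext s; simp [charComb]

theorem one_mulChar_eq_charComb : ⇑η₀ = charComb F 1 (-1) 0 := by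
  ext s
  by_cases hs : s = 0
  · simp [charComb, hs, MulChar.map_zero]
  · simp [charComb, hs, MulChar.one_apply (Ne.isUnit hs)]

theorem charComb_zero (a b c : ℤ) : charComb F a b c 0 = a + b := by simp [charComb]

theorem eq_zero_and_eq_zero_of_quadraticChar_add (hF1 : η (-1) = 1) {u v : F}
    (h : η u + η v + η (u + v) = 0) : u = 0 ∧ v = 0 := by
  by_cases hu : u = 0
  · rw [hu, zero_add, MulChar.map_zero] at h
    exact ⟨hu, quadraticChar_eq_zero_iff.mp (by omega)⟩
  by_cases hv : v = 0
  · rw [hv, add_zero, MulChar.map_zero] at h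
    exact ⟨quadraticChar_eq_zero_iff.mp (by omega), hv⟩
  exfalso
  by_cases huv : u + v = 0
  · rw [huv, eq_neg_of_add_eq_zero_right huv, neg_eq_neg_one_mul u, map_mul, hF1,
      MulChar.map_zero] at h
    exact hu (quadraticChar_eq_zero_iff.mp (by omega))
  · rcases quadraticChar_dichotomy hu with h1 | h1 <;>
      rcases quadraticChar_dichotomy hv with h2 | h2 <;>
      rcases quadraticChar_dichotomy huv with h3 | h3 <;> omega

theorem ne_zero_of_quadraticChar_sum_eq_zero (hF1 : η (-1) = 1) {x y z : F}
    (hxyz : (x, y, z) ≠ 0) (h : η x + η y + η z + η (x + y + z) = 0) :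
    x ≠ 0 ∧ y ≠ 0 ∧ z ≠ 0 ∧ x + y + z ≠ 0 := by
  simp only [ne_eq, Prod.mk_eq_zero, not_and] at hxyz
  refine ⟨fun hx => ?_, fun hy => ?_, fun hz => ?_, fun hs => ?_⟩
  · rw [hx, MulChar.map_zero, zero_add, zero_add] at h
    obtain ⟨hy, hz⟩ := eq_zero_and_eq_zero_of_quadraticChar_add hF1 h
    exact hxyz hx hy hz
  · rw [hy, MulChar.map_zero, add_zero, add_zero] at h
    obtain ⟨hx, hz⟩ := eq_zero_and_eq_zero_of_quadraticChar_add hF1 h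
    exact hxyz hx hy hz
  · rw [hz, MulChar.map_zero, add_zero, add_zero] at h
    obtain ⟨hx, hy⟩ := eq_zero_and_eq_zero_of_quadraticChar_add hF1 h
    exact hxyz hx hy hz
  · have hz : z = -1 * (x + y) := by linear_combination hs
    rw [hs, MulChar.map_zero, add_zero, hz, map_mul, hF1, one_mul] at h
    obtain ⟨hx, hy⟩ := eq_zero_and_eq_zero_of_quadraticChar_add hF1 h
    exact hxyz hx hy (by simp [hz, hx, hy])

-- `3 - e₂ + 3 e₄` in the elementary symmetric functions of the signs: `e₂ = -2, e₄ = 1` when the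
-- sum vanishes, `e₂ = 0, e₄ = -1` when it is `±2`, and `e₂ = 6, e₄ = 1` when it is `±4`.
theorem eight_mul_ite_sum_eq_zero {a b c d : ℤ} (ha : a = 1 ∨ a = -1) (hb : b = 1 ∨ b = -1)
    (hc : c = 1 ∨ c = -1) (hd : d = 1 ∨ d = -1) :
    8 * (if a + b + c + d = 0 then 1 else 0) =
      3 - (a * b + a * c + a * d + b * c + b * d + c * d) + 3 * (a * b * c * d) := by
  rcases ha with rfl | rfl <;> rcases hb with rfl | rfl <;> rcases hc with rfl | rfl <;>
    rcases hd with rfl | rfl <;> norm_num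

theorem eight_mul_ite_quadraticChar_sum_eq_zero (hF1 : η (-1) = 1) (x y z : F) :
    8 * (if (x, y, z) ≠ 0 ∧ η x + η y + η z + η (x + y + z) = 0 then 1 else 0) =
      3 * (η₀ x * η₀ y * η₀ z * η₀ (x + y + z)) -
        (η x * η y * η₀ z * η₀ (x + y + z) + η x * η₀ y * η z * η₀ (x + y + z) +
          η x * η₀ y * η₀ z * η (x + y + z) + η₀ x * η y * η z * η₀ (x + y + z) +
          η₀ x * η y * η₀ z * η (x + y + z) + η₀ x * η₀ y * η z * η (x + y + z)) +
        3 * (η x * η y * η z * η (x + y + z)) := by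
  by_cases hall : x ≠ 0 ∧ y ≠ 0 ∧ z ≠ 0 ∧ x + y + z ≠ 0
  · obtain ⟨hx, hy, hz, hs⟩ := hall
    have hxyz : (x, y, z) ≠ 0 := by simp [hx]
    simp only [MulChar.one_apply (Ne.isUnit hx), MulChar.one_apply (Ne.isUnit hy),
      MulChar.one_apply (Ne.isUnit hz), MulChar.one_apply (Ne.isUnit hs), hxyz, ne_eq,
      not_false_eq_true, true_and, mul_one, one_mul]
    rw [eight_mul_ite_sum_eq_zero (quadraticChar_dichotomy hx) (quadraticChar_dichotomy hy)
      (quadraticChar_dichotomy hz) (quadraticChar_dichotomy hs)]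
  · rw [if_neg fun h => hall (ne_zero_of_quadraticChar_sum_eq_zero hF1 h.1 h.2)]
    simp only [not_and_or, not_not] at hall
    rcases hall with h | h | h | h <;> simp [h, MulChar.map_zero]

theorem eight_mul_card_quadraticChar_sum_eq_zero (hF : ringChar F ≠ 2) (hF1 : η (-1) = 1) :
    8 * (#{t : F × F × F | t ≠ 0 ∧ η t.1 + η t.2.1 + η t.2.2 + η (t.1 + t.2.1 + t.2.2) = 0} : ℤ) =
      3 * (Fintype.card F - 1) ^ 3 := by
  rw [natCast_card_filter, mul_sum, Fintype.sum_prod_type]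
  simp only [Fintype.sum_prod_type, eight_mul_ite_quadraticChar_sum_eq_zero hF1]
  simp only [sum_add_distrib, sum_sub_distrib, ← mul_sum, sum_sum_sum_mul_eq_crossCorr]
  simp only [quadraticChar_eq_charComb, one_mulChar_eq_charComb, crossCorr_charComb hF hF1,
    charComb_zero]
  ring

omit [DecidableEq F] in
theorem ringChar_eq_of_card_eq_prime_pow {p h : ℕ} (hp : p.Prime)
    (hcard : Fintype.card F = p ^ h) : ringChar F = p := by
  have hchar := CharP.char_is_prime F (ringChar F)
  have hdvd : ringChar F ∣ p ^ h := by
    rw [← hcard, ← CharP.cast_eq_zero_iff F]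
    exact FiniteField.cast_card_eq_zero F
  exact (Nat.prime_dvd_prime_iff_eq hchar hp).1 (hchar.dvd_of_dvd_pow hdvd)

theorem quadraticChar_neg_one_eq_one_of_even (h : Even (Fintype.card F / 2)) : η (-1) = 1 := by
  rw [quadraticChar_one_iff_isSquare (neg_ne_zero.2 one_ne_zero),
    FiniteField.isSquare_neg_one_iff]
  obtain ⟨k, hk⟩ := h
  omega

theorem abs_quadraticChar_le_one (a : F) : |η a| ≤ 1 := by
  rcases quadraticChar_isQuadratic F a with h | h | h <;> simp [h]

theorem pow_sum_eq_zero_iff_quadraticChar_sum_eq_zero (hF : 4 < ringChar F) (a b c : F) :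
    a ^ (Fintype.card F / 2) + b ^ (Fintype.card F / 2) + c ^ (Fintype.card F / 2) +
        (a + b + c) ^ (Fintype.card F / 2) = 0 ↔
      η a + η b + η c + η (a + b + c) = 0 := by
  simp only [← quadraticChar_eq_pow_of_char_ne_two' (show ringChar F ≠ 2 by omega)]
  norm_cast
  rw [CharP.intCast_eq_zero_iff F (ringChar F)]
  refine ⟨fun hdvd => Int.eq_zero_of_abs_lt_dvd hdvd ?_, fun h => h ▸ dvd_zero _⟩
  have := abs_le.1 (abs_quadraticChar_le_one a)
  have := abs_le.1 (abs_quadraticChar_le_one b)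
  have := abs_le.1 (abs_quadraticChar_le_one c)
  have := abs_le.1 (abs_quadraticChar_le_one (a + b + c))
  rw [abs_lt]
  constructor <;> omega

end QuadraticChar

section Projective
open Projectivization
open scoped LinearAlgebra.Projectivization
variable {k V : Type*} [DivisionRing k] [AddCommGroup V] [Module k V]

theorem Projectivization.natCard_subtype_mul_natCard_units (P : V → Prop)
    (hP : ∀ (c : kˣ) (v : V), P (c • v) ↔ P v) :
    Nat.card {x : ℙ k V // P x.rep} * Nat.card kˣ = Nat.card {v : V // v ≠ 0 ∧ P v} := by
  have hrep : ∀ v : {v : V // v ≠ 0}, P v ↔ P (mk k v.1 v.2).rep := fun v => by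
    obtain ⟨c, hc⟩ := exists_smul_eq_mk_rep k v.1 v.2
    rw [← hc, hP]
  rw [← Nat.card_prod, Nat.card_congr ((Equiv.subtypeSubtypeEquivSubtypeInter _ P).symm.trans
    (((nonZeroEquivProjectivizationProdUnits k V).subtypeEquiv (q := fun w => P w.1.rep) hrep).trans
      (Equiv.prodSubtypeFstEquivSubtypeProd (p := fun x : ℙ k V => P x.rep))))]

end Projective

section FermatSlice
variable {F : Type} [Field F] {d : ℕ} {e0 e1 e2 : F}

theorem eval_smul_fermatSlice (c : F) (v : Fin 3 → F) :
    eval (c • v) (fermatSlice F d e0 e1 e2) = c ^ d * eval v (fermatSlice F d e0 e1 e2) := by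
  simp only [fermatSlice, map_add, map_pow, map_mul, eval_X, eval_C, Pi.smul_apply, smul_eq_mul]
  rw [show e0 * (c * v 0) + e1 * (c * v 1) + e2 * (c * v 2) = c * (e0 * v 0 + e1 * v 1 + e2 * v 2)
    by ring]
  simp only [mul_pow]
  ring

theorem eval_fermatSlice (h0 : e0 ^ d = 1) (h1 : e1 ^ d = 1) (h2 : e2 ^ d = 1) (v : Fin 3 → F) :
    eval v (fermatSlice F d e0 e1 e2) = (e0 * v 0) ^ d + (e1 * v 1) ^ d + (e2 * v 2) ^ d +
      (e0 * v 0 + e1 * v 1 + e2 * v 2) ^ d := by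
  simp [fermatSlice, mul_pow, h0, h1, h2]

theorem natCard_eval_fermatSlice_eq_zero [Fintype F] [DecidableEq F] (hd : d ≠ 0)
    (h0 : e0 ^ d = 1) (h1 : e1 ^ d = 1) (h2 : e2 ^ d = 1) :
    Nat.card {v : Fin 3 → F // v ≠ 0 ∧ eval v (fermatSlice F d e0 e1 e2) = 0} =
      #{t : F × F × F |
        t ≠ 0 ∧ t.1 ^ d + t.2.1 ^ d + t.2.2 ^ d + (t.1 + t.2.1 + t.2.2) ^ d = 0} := by
  have hne : ∀ {e : F}, e ^ d = 1 → e ≠ 0 := fun he h => by simp [h, zero_pow hd] at he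
  let scale : (Fin 3 → F) ≃ F × F × F :=
    { toFun v := (e0 * v 0, e1 * v 1, e2 * v 2)
      invFun t := ![e0⁻¹ * t.1, e1⁻¹ * t.2.1, e2⁻¹ * t.2.2]
      left_inv v := by
        ext i; fin_cases i <;> simp [hne h0, hne h1, hne h2]
      right_inv t := by simp [hne h0, hne h1, hne h2] }
  rw [← Fintype.card_subtype, ← Nat.card_eq_fintype_card]
  refine Nat.card_congr (scale.subtypeEquiv fun v => ?_)
  simp [scale, eval_fermatSlice h0 h1 h2, funext_iff, Fin.forall_fin_succ, hne h0, hne h1, hne h2]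

end FermatSlice

theorem statement17_general (p h : ℕ) (hp : Nat.Prime p) (hp3 : 3 < p)
    (F : Type) [Field F] [Fintype F] (hcard : Fintype.card F = p ^ h)
    (d : ℕ) (hd : p ^ h = 2 * d + 1) (heven : Even d) (e0 e1 e2 : F)
    (h0 : e0 ^ d = 1) (h1 : e1 ^ d = 1) (h2 : e2 ^ d = 1) :
    (8 * Nat.card {x : Projectivization F (Fin 3 → F) //
        MvPolynomial.eval x.rep (fermatSlice F d e0 e1 e2) = 0} : ℤ) =
      3 * ((p ^ h : ℤ) - 1) ^ 2 := by
  classical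
  have hchar : ringChar F = p := ringChar_eq_of_card_eq_prime_pow hp hcard
  have hF5 : 4 < ringChar F := by
    have : p ≠ 4 := by rintro rfl; norm_num at hp
    omega
  obtain rfl : d = Fintype.card F / 2 := by omega
  have hq : 1 < Fintype.card F := Fintype.one_lt_card
  have hproj := Projectivization.natCard_subtype_mul_natCard_units (k := F)
    (fun v : Fin 3 → F => eval v (fermatSlice F (Fintype.card F / 2) e0 e1 e2) = 0)
    (fun c v => by simp [Units.smul_def, eval_smul_fermatSlice])
  rw [natCard_eval_fermatSlice_eq_zero (Nat.div_pos hq two_pos).ne' h0 h1 h2,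
    filter_congr fun t _ =>
      and_congr_right' (pow_sum_eq_zero_iff_quadraticChar_sum_eq_zero hF5 _ _ _),
    Nat.card_eq_fintype_card (α := Fˣ), Fintype.card_units] at hproj
  have hcount := eight_mul_card_quadraticChar_sum_eq_zero (by omega)
    (quadraticChar_neg_one_eq_one_of_even heven)
  rw [← hproj] at hcount
  rw [show (p : ℤ) ^ h = Fintype.card F by exact_mod_cast hcard.symm]
  push_cast [Nat.cast_sub hq.le] at hcount
  apply mul_right_cancel₀ (show (Fintype.card F : ℤ) - 1 ≠ 0 by omega)
  linear_combination hcount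

/-- If `d` is even and `η(e0) = η(e1) = η(e2) = 1`, then the number of
points of `ℙ²(F_q)` on the curve `C = 0` equals `3(q - 1)²/8`
(i.e. `n(n + q - 1)/2` with `n = (q-1)/2 = d`). -/
theorem statement17 (p h : ℕ) (hp : Nat.Prime p) (hp3 : 3 < p) (hh : 0 < h)
    (F : Type) [Field F] [Fintype F] (hcard : Fintype.card F = p ^ h)
    (d : ℕ) (hd : p ^ h = 2 * d + 1) (heven : Even d) (e0 e1 e2 : F)
    (h0 : e0 ^ d = 1) (h1 : e1 ^ d = 1) (h2 : e2 ^ d = 1) :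
    (8 * Nat.card {x : Projectivization F (Fin 3 → F) //
        MvPolynomial.eval x.rep (fermatSlice F d e0 e1 e2) = 0} : ℤ) =
      3 * ((p ^ h : ℤ) - 1) ^ 2 :=
  statement17_general p h hp hp3 F hcard d hd heven e0 e1 e2 h0 h1 h2
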